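/- arXiv:math/9812138 — 2 statements merged into one kernel-verified Lean document; each statement's English description precedes it below -/
import Mathlib

section
/- Suppose ρ_j ∈ (0,1) for j ∈ ℕ, ∑_{j=1}^∞ ρ_j^{s} = 1 for some finite s > 0, and for each m ≥ 1 (with ∑_{j=1}^m ρ_j^{s^(m)} = 1 defining s^(m) when ρ_1^0 + ... ≥ 1, i.e. m ≥ 2) let s^(m) be the unique solution of ∑_{j=1}^m ρ_j^{s^(m)} = 1. Then the sequence s^(m) is nondecreasing and lim_{m→∞} s^(m) = s. -/
/-!
Since every `ρ j` lies in `(0, 1)`, a finite sum `∑ j ∈ t, ρ j ^ x` is strictly decreasing in `x`,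
so `s^(m)` is pinned down by comparing such sums with `1`. Adding terms can only raise the sum at
`s^(m)`, which forces `s^(m) ≤ s^(n)` for `m ≤ n` and `s^(m) ≤ s`. Conversely, for `a < s` the
terms `ρ j ^ a` strictly dominate `ρ j ^ s`, so their partial sums eventually exceed
`∑' j, ρ j ^ s = 1`, forcing `a < s^(m)` for large `m`.
-/

open Filter Finset

lemma strictAnti_sum_rpow {ι : Type*} {ρ : ι → ℝ} (hρ : ∀ j, ρ j ∈ Set.Ioo (0 : ℝ) 1)
    {t : Finset ι} (ht : t.Nonempty) : StrictAnti fun x : ℝ => ∑ j ∈ t, ρ j ^ x :=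
  fun _ _ hab => sum_lt_sum_of_nonempty ht fun j _ =>
    Real.rpow_lt_rpow_of_exponent_gt (hρ j).1 (hρ j).2 hab

lemma eventually_lt_sum_range_of_hasSum_of_lt {f g : ℕ → ℝ} {c : ℝ} (hf : HasSum f c)
    (hg : 0 ≤ g) (hfg : f ≤ g) {i : ℕ} (hi : f i < g i) :
    ∀ᶠ n in atTop, c < ∑ k ∈ range n, g k := by
  by_cases hgs : Summable g
  · exact hgs.hasSum.tendsto_sum_nat.eventually
      (eventually_gt_nhds (hasSum_lt hfg hi hf hgs.hasSum))
  · exact ((not_summable_iff_tendsto_nat_atTop_of_nonneg hg).1 hgs).eventually_gt_atTop c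

theorem stmt4_general (ρ : ℕ → ℝ) (hρ : ∀ j, ρ j ∈ Set.Ioo (0 : ℝ) 1)
    (s : ℝ) (hsum : ∑' j, ρ j ^ s = 1)
    (sm : ℕ → ℝ)
    (hsmeq : ∀ m, 2 ≤ m → ∑ j ∈ Finset.range m, ρ j ^ sm m = 1) :
    (∀ m n, 2 ≤ m → m ≤ n → sm m ≤ sm n) ∧
      Tendsto sm atTop (nhds s) := by
  have hpos : ∀ j (x : ℝ), 0 ≤ ρ j ^ x := fun j x => (Real.rpow_pos_of_pos (hρ j).1 x).le
  have hS : HasSum (fun j => ρ j ^ s) 1 := by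
    have hsumm : Summable fun j => ρ j ^ s := by
      by_contra h
      simp [tsum_eq_zero_of_not_summable h] at hsum
    exact hsumm.hasSum_iff.2 hsum
  have hanti : ∀ m, 2 ≤ m → StrictAnti fun x : ℝ => ∑ j ∈ range m, ρ j ^ x :=
    fun m hm => strictAnti_sum_rpow hρ (nonempty_range_iff.2 (by omega))
  have hle : ∀ m, 2 ≤ m → sm m ≤ s := fun m hm =>
    (hanti m hm).le_iff_ge.1 (hsmeq m hm ▸ sum_le_hasSum _ (fun j _ => hpos j s) hS)
  refine ⟨fun m n hm hmn => (hanti n (hm.trans hmn)).le_iff_ge.1 ?_, tendsto_order.2 ⟨?_, ?_⟩⟩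
  · calc ∑ j ∈ range n, ρ j ^ sm n = ∑ j ∈ range m, ρ j ^ sm m := by
          rw [hsmeq n (hm.trans hmn), hsmeq m hm]
      _ ≤ ∑ j ∈ range n, ρ j ^ sm m :=
          sum_le_sum_of_subset_of_nonneg (range_subset_range.2 hmn) fun j _ _ => hpos j _
  · intro a ha
    have hlt : ∀ j, ρ j ^ s < ρ j ^ a := fun j =>
      Real.rpow_lt_rpow_of_exponent_gt (hρ j).1 (hρ j).2 ha
    filter_upwards [eventually_lt_sum_range_of_hasSum_of_lt hS (fun j => hpos j a)
      (fun j => (hlt j).le) (hlt 0), eventually_ge_atTop 2] with m hm1 hm2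
    exact (hanti m hm2).lt_iff_gt.1 (by rwa [hsmeq m hm2])
  · intro a ha
    filter_upwards [eventually_ge_atTop 2] with m hm
    exact (hle m hm).trans_lt ha

/-- If `∑' j, (ρ j)^s = 1` for a finite `s > 0` and `sm m` is the unique solution
of `∑_{j<m} (ρ j)^(sm m) = 1` (for `m ≥ 2`), then `sm` is nondecreasing and
`sm m → s` as `m → ∞`. -/
theorem stmt4 (ρ : ℕ → ℝ) (hρ : ∀ j, ρ j ∈ Set.Ioo (0 : ℝ) 1)
    (s : ℝ) (hs : 0 < s) (hsum : ∑' j, ρ j ^ s = 1)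
    (sm : ℕ → ℝ) (hsm0 : ∀ m, 2 ≤ m → 0 ≤ sm m)
    (hsmeq : ∀ m, 2 ≤ m → ∑ j ∈ Finset.range m, ρ j ^ sm m = 1) :
    (∀ m n, 2 ≤ m → m ≤ n → sm m ≤ sm n) ∧
      Tendsto sm atTop (nhds s) :=
  stmt4_general ρ hρ s hsum sm hsmeq
end

section
/- Let (P_j) be a probability sequence and ρ_j ∈ (0,1) with β > 0 and ∑_{j=1}^∞ P_j^2 ρ_j^{-β} = 1. Then for every 0 < t < 1 the stopping family Λ(t) = {J : ρ_J < t ≤ ρ_{parent(J)}} satisfies ∑_{J∈Λ(t)} P_J^2 ρ_J^{-β} = 1. -/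
open MeasureTheory Set ENNReal

/-- The stopping-time family `Λ(t)`: nonempty multi-indices whose contraction ratio
first drops below `t` at the last step. -/
def stopFamily (ρ : ℕ → ℝ) (t : ℝ) : Set (List ℕ) :=
  {J | J ≠ [] ∧ (J.map ρ).prod < t ∧ t ≤ (J.dropLast.map ρ).prod}

/-!
Put `q_j = P_j² ρ_j^{-β}`, so that the weight `q_J` of a word is multiplicative and the weights
of the children `J ++ [j]` of a word sum to `q_J`. Call a word of length `n` unstopped if
`t ≤ ρ_J`. Each child of an unstopped word is either unstopped or belongs to `Λ(t)`, so the
unstopped mass at level `n` equals the mass of `Λ(t)` at level `n + 1` plus the unstopped mass at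
level `n + 1`; at level `0` it is `1`. Since `1 ≤ ρ_J / t` on unstopped words, the unstopped mass
at level `n` is at most `t⁻¹ (∑ q_j ρ_j)ⁿ`, which tends to `0` because `∑ q_j ρ_j < ∑ q_j = 1`.
Telescoping, `Λ(t)` has mass `1`.
-/

open Filter Topology

lemma tsum_eq_of_eq_add_of_tendsto_zero {m S : ℕ → ℝ≥0∞} (h : ∀ n, S n = m n + S (n + 1))
    (hS : Tendsto S atTop (𝓝 0)) : ∑' n, m n = S 0 := by
  have partial_add : ∀ n, ∑ i ∈ Finset.range n, m i + S n = S 0 := by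
    intro n
    induction n with
    | zero => simp
    | succ n ih => rw [Finset.sum_range_succ, add_assoc, ← h, ih]
  refine le_antisymm (ENNReal.tsum_le_of_sum_range_le fun n => partial_add n ▸ le_self_add) ?_
  have : Tendsto (fun n => ∑' n, m n + S n) atTop (𝓝 (∑' n, m n)) := by
    simpa using tendsto_const_nhds.add hS
  refine ge_of_tendsto this (Eventually.of_forall fun n => ?_)
  rw [← partial_add n]
  gcongr
  exact ENNReal.sum_le_tsum _

section Words

variable {α : Type*}

lemma tsum_eq_tsum_tsum_append_singleton (g : List α → ℝ≥0∞) (h0 : g [] = 0) :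
    ∑' K, g K = ∑' J, ∑' a, g (J ++ [a]) := by
  have hinj : Function.Injective fun p : List α × α => p.1 ++ [p.2] := by
    rintro ⟨J, a⟩ ⟨J', a'⟩ h
    obtain ⟨rfl, h⟩ := List.append_inj' h rfl
    simp_all
  rw [← ENNReal.tsum_prod, hinj.tsum_eq (f := g)]
  intro K hK
  obtain rfl | ⟨J, a, rfl⟩ := K.eq_nil_or_concat
  · exact absurd h0 hK
  · exact ⟨(J, a), by simp⟩

lemma tsum_eq_tsum_tsum_indicator_length (g : List α → ℝ≥0∞) :
    ∑' J, g J = ∑' n, ∑' J, {J : List α | J.length = n}.indicator g J := by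
  rw [ENNReal.tsum_comm]
  refine tsum_congr fun J => ?_
  rw [tsum_eq_single J.length fun n hn => indicator_of_notMem (fun h => hn h.symm) g]
  simp

lemma tsum_indicator_length_prod_map (f : α → ℝ≥0∞) (n : ℕ) :
    ∑' J, {J : List α | J.length = n}.indicator (fun J => (J.map f).prod) J
      = (∑' a, f a) ^ n := by
  induction n with
  | zero =>
    rw [tsum_eq_single [] fun J hJ => indicator_of_notMem (by simpa using hJ) _]
    simp
  | succ n ih =>
    rw [tsum_eq_tsum_tsum_append_singleton _ (by simp), pow_succ, ← ih,
      ← ENNReal.tsum_mul_right]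
    refine tsum_congr fun J => ?_
    rw [← ENNReal.tsum_mul_left]
    refine tsum_congr fun a => ?_
    by_cases hJ : J.length = n <;> simp [hJ]

end Words

lemma list_prod_map_ofReal {ι : Type*} (l : List ι) {f : ι → ℝ} (hf : ∀ i, 0 ≤ f i) :
    (l.map fun i => ENNReal.ofReal (f i)).prod = ENNReal.ofReal (l.map f).prod := by
  induction l with
  | nil => simp
  | cons a l ih => simp [ih, ENNReal.ofReal_mul (hf a)]

def unstopped (ρ : ℕ → ℝ) (t : ℝ) (n : ℕ) : Set (List ℕ) :=
  {J | J.length = n ∧ t ≤ (J.map ρ).prod}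

section Stopping

variable {ρ : ℕ → ℝ} {t : ℝ}

lemma unstopped_zero (ht : t ≤ 1) : unstopped ρ t 0 = {[]} := by
  ext J
  simp only [unstopped, mem_ofPred_eq, List.length_eq_zero_iff, mem_singleton_iff,
    and_iff_left_iff_imp]
  rintro rfl
  simpa using ht

lemma length_inter_stopFamily_zero : {J : List ℕ | J.length = 0} ∩ stopFamily ρ t = ∅ := by
  ext J
  simp +contextual [stopFamily]

lemma disjoint_unstopped_stopFamily (n : ℕ) : Disjoint (unstopped ρ t n) (stopFamily ρ t) :=
  disjoint_left.2 fun _ hU hΛ => hΛ.2.1.not_ge hU.2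

lemma append_singleton_mem_unstopped_union_iff (hρ0 : ∀ j, 0 ≤ ρ j) (hρ1 : ∀ j, ρ j ≤ 1)
    {n : ℕ} {J : List ℕ} {j : ℕ} :
    J ++ [j] ∈ unstopped ρ t (n + 1) ∪ {K | K.length = n + 1} ∩ stopFamily ρ t
      ↔ J ∈ unstopped ρ t n := by
  have hle : (J.map ρ).prod * ρ j ≤ (J.map ρ).prod :=
    mul_le_of_le_one_right (List.prod_nonneg (by simpa using fun j _ => hρ0 j)) (hρ1 j)
  simp only [unstopped, stopFamily, mem_union, mem_inter_iff, mem_ofPred_eq, List.length_append,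
    List.length_singleton, Nat.add_right_cancel_iff, List.map_append, List.prod_append,
    List.map_singleton, List.prod_singleton, List.dropLast_concat, ne_eq, List.append_eq_nil_iff,
    List.cons_ne_self, and_false, not_false_eq_true, true_and]
  constructor
  · rintro (⟨hn, h⟩ | ⟨hn, -, h⟩) <;> exact ⟨hn, by linarith⟩
  · rintro ⟨hn, h⟩
    exact (le_or_gt t _).imp (⟨hn, ·⟩) (⟨hn, ·, h⟩)

variable {q : ℕ → ℝ≥0∞}

lemma tsum_indicator_unstopped_eq_add (hq : ∑' j, q j = 1) (hρ0 : ∀ j, 0 ≤ ρ j)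
    (hρ1 : ∀ j, ρ j ≤ 1) (n : ℕ) :
    ∑' J, (unstopped ρ t n).indicator (fun J => (J.map q).prod) J
      = ∑' J, ({K | K.length = n + 1} ∩ stopFamily ρ t).indicator (fun J => (J.map q).prod) J
        + ∑' J, (unstopped ρ t (n + 1)).indicator (fun J => (J.map q).prod) J := by
  set w : List ℕ → ℝ≥0∞ := fun J => (J.map q).prod
  have hdisj : Disjoint (unstopped ρ t (n + 1)) ({K | K.length = n + 1} ∩ stopFamily ρ t) :=
    (disjoint_unstopped_stopFamily _).mono_right inter_subset_right
  calc ∑' J, (unstopped ρ t n).indicator w J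
      = ∑' J, ∑' j, (unstopped ρ t n).indicator w J * q j := by
        simp_rw [ENNReal.tsum_mul_left, hq, mul_one]
    _ = ∑' J, ∑' j, (unstopped ρ t (n + 1) ∪ {K | K.length = n + 1} ∩ stopFamily ρ t).indicator
          w (J ++ [j]) := by
        refine tsum_congr fun J => tsum_congr fun j => ?_
        by_cases hJ : J ∈ unstopped ρ t n
        · rw [indicator_of_mem hJ, indicator_of_mem
            ((append_singleton_mem_unstopped_union_iff hρ0 hρ1).2 hJ)]
          simp [w]
        · rw [indicator_of_notMem hJ, indicator_of_notMem
            (mt (append_singleton_mem_unstopped_union_iff hρ0 hρ1).1 hJ), zero_mul]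
    _ = ∑' J, ({K | K.length = n + 1} ∩ stopFamily ρ t).indicator w J
          + ∑' J, (unstopped ρ t (n + 1)).indicator w J := by
        rw [← tsum_eq_tsum_tsum_append_singleton _ (indicator_of_notMem (by simp [unstopped]) _),
          indicator_union_of_disjoint hdisj, ENNReal.tsum_add, add_comm]

lemma tsum_mul_ofReal_lt_one (hq : ∑' j, q j = 1) (hρ1 : ∀ j, ρ j < 1) :
    ∑' j, q j * ENNReal.ofReal (ρ j) < 1 := by
  obtain ⟨i, hi⟩ : ∃ i, q i ≠ 0 := by
    by_contra! h
    simp [h] at hq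
  have hi_top : q i ≠ ∞ := ne_top_of_le_ne_top one_ne_top (hq ▸ ENNReal.le_tsum i)
  have hle : ∀ j, q j * ENNReal.ofReal (ρ j) ≤ q j :=
    fun j => mul_le_of_le_one_right' (ofReal_le_one.2 (hρ1 j).le)
  rw [← hq]
  refine ENNReal.tsum_lt_tsum (ne_top_of_le_ne_top (hq ▸ one_ne_top) (ENNReal.tsum_le_tsum hle))
    hle (i := i) ?_
  rw [mul_comm]
  simpa using ENNReal.mul_lt_mul_left hi hi_top (ofReal_lt_one.2 (hρ1 i))

/-- Chernoff-type bound: `1 ≤ ρ_J / t` on an unstopped word `J`, and the level-`n` sum of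
`q_J ρ_J` is `(∑ q_j ρ_j)ⁿ`. -/
lemma tsum_indicator_unstopped_le (hρ0 : ∀ j, 0 ≤ ρ j) (ht : 0 < t) (n : ℕ) :
    ∑' J, (unstopped ρ t n).indicator (fun J => (J.map q).prod) J
      ≤ (ENNReal.ofReal t)⁻¹ * (∑' j, q j * ENNReal.ofReal (ρ j)) ^ n := by
  rw [← tsum_indicator_length_prod_map, ← ENNReal.tsum_mul_left]
  refine ENNReal.tsum_le_tsum fun J => ?_
  by_cases hJ : J ∈ unstopped ρ t n
  · rw [indicator_of_mem hJ, indicator_of_mem (s := {J : List ℕ | J.length = n}) hJ.1,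
      List.prod_map_mul, list_prod_map_ofReal _ hρ0,
      ← ENNReal.mul_le_iff_le_inv (by simpa using ht) ofReal_ne_top, mul_comm]
    gcongr
    exact hJ.2
  · simp [indicator_of_notMem hJ]

lemma tendsto_tsum_indicator_unstopped (hq : ∑' j, q j = 1) (hρ0 : ∀ j, 0 ≤ ρ j)
    (hρ1 : ∀ j, ρ j < 1) (ht : 0 < t) :
    Tendsto (fun n => ∑' J, (unstopped ρ t n).indicator (fun J => (J.map q).prod) J)
      atTop (𝓝 0) := by
  have hbound : Tendsto (fun n => (ENNReal.ofReal t)⁻¹ * (∑' j, q j * ENNReal.ofReal (ρ j)) ^ n)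
      atTop (𝓝 0) := by
    simpa using ENNReal.Tendsto.const_mul
      (ENNReal.tendsto_pow_atTop_nhds_zero_of_lt_one (tsum_mul_ofReal_lt_one hq hρ1))
      (Or.inr (by simpa using ht))
  exact tendsto_of_tendsto_of_tendsto_of_le_of_le tendsto_const_nhds hbound (fun _ => zero_le)
    (tsum_indicator_unstopped_le hρ0 ht)

theorem tsum_stopFamily_prod_map_eq_one (hq : ∑' j, q j = 1) (hρ0 : ∀ j, 0 ≤ ρ j)
    (hρ1 : ∀ j, ρ j < 1) (ht0 : 0 < t) (ht1 : t ≤ 1) :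
    ∑' J : stopFamily ρ t, ((J : List ℕ).map q).prod = 1 := by
  set w : List ℕ → ℝ≥0∞ := fun J => (J.map q).prod
  calc ∑' J : stopFamily ρ t, w J
      = ∑' n, ∑' J, ({K | K.length = n} ∩ stopFamily ρ t).indicator w J := by
        simp_rw [tsum_subtype (stopFamily ρ t) w, ← indicator_indicator]
        exact tsum_eq_tsum_tsum_indicator_length _
    _ = ∑' n, ∑' J, ({K | K.length = n + 1} ∩ stopFamily ρ t).indicator w J := by
        rw [tsum_eq_zero_add' ENNReal.summable, length_inter_stopFamily_zero]
        simp
    _ = ∑' J, (unstopped ρ t 0).indicator w J :=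
        tsum_eq_of_eq_add_of_tendsto_zero
          (tsum_indicator_unstopped_eq_add hq hρ0 fun j => (hρ1 j).le)
          (tendsto_tsum_indicator_unstopped hq hρ0 hρ1 ht0)
    _ = 1 := by simp [unstopped_zero ht1, w]

end Stopping

lemma ofReal_prod_sq_mul_rpow (P ρ : ℕ → ℝ) (hρ0 : ∀ j, 0 ≤ ρ j) (s : ℝ) (J : List ℕ) :
    ENNReal.ofReal ((J.map P).prod ^ 2 * (J.map ρ).prod ^ s)
      = (J.map fun j => ENNReal.ofReal (P j ^ 2 * ρ j ^ s)).prod := by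
  rw [list_prod_map_ofReal _ fun j => mul_nonneg (sq_nonneg _) (Real.rpow_nonneg (hρ0 j) s),
    List.prod_map_mul, Real.list_prod_map_rpow' _ _ (fun j _ => hρ0 j)]
  simp_rw [sq, List.prod_map_mul]

theorem stmt11_general (P ρ : ℕ → ℝ) (β : ℝ)
    (hρ : ∀ j, ρ j ∈ Set.Ioo (0 : ℝ) 1)
    (hsum : ∑' j, ENNReal.ofReal ((P j) ^ 2 * (ρ j) ^ (-β)) = 1)
    (t : ℝ) (ht : t ∈ Set.Ioo (0 : ℝ) 1) :
    ∑' J : stopFamily ρ t,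
      ENNReal.ofReal ((((J : List ℕ).map P).prod) ^ 2 * (((J : List ℕ).map ρ).prod) ^ (-β)) = 1 := by
  have hρ0 : ∀ j, 0 ≤ ρ j := fun j => (hρ j).1.le
  simp_rw [ofReal_prod_sq_mul_rpow P ρ hρ0]
  exact tsum_stopFamily_prod_map_eq_one hsum hρ0 (fun j => (hρ j).2) ht.1 ht.2.le

/-- If `∑ j, P_j² ρ_j^{-β} = 1`, then for every `0 < t < 1` the stopping family
satisfies `∑_{J ∈ Λ(t)} P_J² ρ_J^{-β} = 1`. -/
theorem stmt11 (P ρ : ℕ → ℝ) (β : ℝ) (hβ : 0 < β)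
    (hP : ∀ j, 0 ≤ P j) (hPsum : ∑' j, P j = 1)
    (hρ : ∀ j, ρ j ∈ Set.Ioo (0 : ℝ) 1)
    (hsum : ∑' j, ENNReal.ofReal ((P j) ^ 2 * (ρ j) ^ (-β)) = 1)
    (t : ℝ) (ht : t ∈ Set.Ioo (0 : ℝ) 1) :
    ∑' J : stopFamily ρ t,
      ENNReal.ofReal ((((J : List ℕ).map P).prod) ^ 2 * (((J : List ℕ).map ρ).prod) ^ (-β)) = 1 :=
  stmt11_general P ρ β hρ hsum t ht
end
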